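/- For the three-dimensional ℓ_p unit ball K_p with 2 ≤ p < ∞ (and for the cube p = ∞), K_p is covered by the eight translates √(2/3)·K_p + (±1/3, ±1/3, ±1/3). Hence γ₈(K_p) ≤ √(2/3). -/

import Mathlib

/-!
Send a point `w` to the corner `(±1/3, ±1/3, ±1/3)` of its own orthant; the coordinates of the
difference then have absolute values `||wᵢ| - 1/3|`. For `t ∈ [0, 1]` the value `|t - 1/3|ᵖ`
is at most the interpolation `(2/3)ᵖ tᵖ + (1/3)ᵖ (1 - tᵖ)` between its values at `t = 0` and at
`t = 1`, so summing over a point of `K_p` gives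
`∑ ||wᵢ| - 1/3|ᵖ ≤ (2/3)ᵖ + 2 (1/3)ᵖ ≤ (2/3)^(p/2) = √(2/3)ᵖ`, the last inequality being the
place where `p ≥ 2` enters. For the cube, `||wᵢ| - 1/3| ≤ 2/3 ≤ √(2/3)`.
-/

open Pointwise

/-- `gamma m K` is the infimum of all `r > 0` such that `K` can be covered by
`m` translates of `r • K`. -/
noncomputable def gamma {E : Type*} [NormedAddCommGroup E] [NormedSpace ℝ E]
    (m : ℕ) (K : Set E) : ℝ :=
  sInf {r : ℝ | 0 < r ∧ ∃ x : Fin m → E, K ⊆ ⋃ i, (x i +ᵥ r • K)}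

/-- The sign `1` or `-1` associated to a boolean. -/
def sgn (b : Bool) : ℝ := if b then 1 else -1

lemma gamma_le_of_subset_iUnion {E ι : Type*} [NormedAddCommGroup E] [NormedSpace ℝ E]
    [Fintype ι] {m : ℕ} (hm : Fintype.card ι = m) {K : Set E} {r : ℝ} (hr : 0 < r)
    (c : ι → E) (hK : K ⊆ ⋃ i, c i +ᵥ r • K) :
    gamma m K ≤ r := by
  let eqv : ι ≃ Fin m := Fintype.equivFinOfCardEq hm
  refine csInf_le ⟨0, fun _ hr' => hr'.1.le⟩ ⟨hr, c ∘ eqv.symm, hK.trans ?_⟩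
  exact Set.iUnion_subset fun i => Set.subset_iUnion_of_subset (eqv i) (by simp)

lemma subset_iUnion_vadd_smul_of_forall {E ι : Type*} [AddCommGroup E] [Module ℝ E]
    {K : Set E} {s : ℝ} (hs : s ≠ 0) (c : ι → E) (hK : ∀ w ∈ K, ∃ i, s⁻¹ • (w - c i) ∈ K) :
    K ⊆ ⋃ i, c i +ᵥ s • K := by
  intro w hw
  obtain ⟨i, hi⟩ := hK w hw
  refine Set.mem_iUnion.2 ⟨i, ?_⟩
  rwa [Set.mem_vadd_set_iff_neg_vadd_mem, Set.mem_smul_set_iff_inv_smul_mem₀ hs, vadd_eq_add,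
    neg_add_eq_sub]

lemma rpow_abs_sub_third_le {p t : ℝ} (hp : 0 ≤ p) (ht0 : 0 ≤ t) (ht1 : t ≤ 1) :
    |t - 1/3| ^ p ≤ (2/3 : ℝ) ^ p * t ^ p + (1/3 : ℝ) ^ p * (1 - t ^ p) := by
  have htp0 : 0 ≤ t ^ p := Real.rpow_nonneg ht0 p
  have htp1 : t ^ p ≤ 1 := Real.rpow_le_one ht0 ht1 hp
  have hthird : (1/3 : ℝ) ^ p ≤ (2/3) ^ p := Real.rpow_le_rpow (by norm_num) (by norm_num) hp
  rcases le_or_gt t (1/3) with h | h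
  · have : |t - 1/3| ^ p ≤ (1/3 : ℝ) ^ p :=
      Real.rpow_le_rpow (abs_nonneg _) (by rw [abs_sub_le_iff]; constructor <;> linarith) hp
    nlinarith
  · have : |t - 1/3| ^ p ≤ (2/3 : ℝ) ^ p * t ^ p := by
      rw [← Real.mul_rpow (by norm_num) ht0]
      exact Real.rpow_le_rpow (abs_nonneg _) (by rw [abs_sub_le_iff]; constructor <;> linarith) hp
    nlinarith [Real.rpow_nonneg (show (0 : ℝ) ≤ 1/3 by norm_num) p]

lemma two_thirds_rpow_add_two_mul_third_rpow_le {p : ℝ} (hp : 2 ≤ p) :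
    (2/3 : ℝ) ^ p + 2 * (1/3 : ℝ) ^ p ≤ (2/3 : ℝ) ^ (p/2) := by
  set a : ℝ := (2/3 : ℝ) ^ (p/2)
  set b : ℝ := (1/3 : ℝ) ^ (p/2)
  have hsq : ∀ x : ℝ, 0 ≤ x → x ^ p = (x ^ (p/2)) ^ 2 := fun x hx => by
    rw [← Real.rpow_natCast, ← Real.rpow_mul hx]; ring_nf
  have ha0 : 0 ≤ a := Real.rpow_nonneg (by norm_num) _
  have ha : a ≤ 2/3 := by
    simpa using Real.rpow_le_rpow_of_exponent_ge (x := 2/3) (by norm_num) (by norm_num)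
      (show 1 ≤ p/2 by linarith)
  have hhalf : (1/2 : ℝ) ^ (p/2) ≤ 1/2 := by
    simpa using Real.rpow_le_rpow_of_exponent_ge (x := 1/2) (by norm_num) (by norm_num)
      (show 1 ≤ p/2 by linarith)
  have hb : b = (1/2 : ℝ) ^ (p/2) * a := by
    change (1/3 : ℝ) ^ (p/2) = (1/2) ^ (p/2) * (2/3) ^ (p/2)
    rw [← Real.mul_rpow (by norm_num) (by norm_num)]; norm_num
  have hb0 : 0 ≤ b := Real.rpow_nonneg (by norm_num) _
  -- `(2/3)ᵖ = a²`, `(1/3)ᵖ = b²` and `b ≤ a/2`, so the left side is at most `(3/2) a² ≤ a`.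
  rw [hsq _ (by norm_num), hsq (1/3) (by norm_num)]
  nlinarith [mul_le_mul_of_nonneg_right hhalf ha0]

lemma sum_rpow_abs_sub_third_le {p x y z : ℝ} (hp : 2 ≤ p) (hx : 0 ≤ x) (hy : 0 ≤ y)
    (hz : 0 ≤ z) (h : x ^ p + y ^ p + z ^ p ≤ 1) :
    |x - 1/3| ^ p + |y - 1/3| ^ p + |z - 1/3| ^ p ≤ (2/3 : ℝ) ^ (p/2) := by
  have hp0 : 0 ≤ p := by linarith
  have le_one : ∀ t : ℝ, 0 ≤ t → t ^ p ≤ 1 → t ≤ 1 := fun t ht htp =>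
    (Real.rpow_le_rpow_iff ht zero_le_one (by linarith : (0 : ℝ) < p)).1 (by rwa [Real.one_rpow])
  have hxp := Real.rpow_nonneg hx p
  have hyp := Real.rpow_nonneg hy p
  have hzp := Real.rpow_nonneg hz p
  have kx := rpow_abs_sub_third_le hp0 hx (le_one x hx (by linarith))
  have ky := rpow_abs_sub_third_le hp0 hy (le_one y hy (by linarith))
  have kz := rpow_abs_sub_third_le hp0 hz (le_one z hz (by linarith))
  have hthird : (1/3 : ℝ) ^ p ≤ (2/3) ^ p := Real.rpow_le_rpow (by norm_num) (by norm_num) hp0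
  nlinarith [two_thirds_rpow_add_two_mul_third_rpow_le hp]

noncomputable def corner (e : Bool × Bool × Bool) : ℝ × ℝ × ℝ :=
  (sgn e.1 / 3, sgn e.2.1 / 3, sgn e.2.2 / 3)

noncomputable def signs (w : ℝ × ℝ × ℝ) : Bool × Bool × Bool :=
  (decide (0 ≤ w.1), decide (0 ≤ w.2.1), decide (0 ≤ w.2.2))

lemma abs_inv_mul_sub_sgn_div_three {s : ℝ} (hs : 0 ≤ s) (u : ℝ) :
    |s⁻¹ * (u - sgn (decide (0 ≤ u)) / 3)| = s⁻¹ * |(|u| - 1/3)| := by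
  rw [abs_mul, abs_of_nonneg (inv_nonneg.2 hs)]
  rcases le_or_gt 0 u with h | h
  · simp [sgn, h, abs_of_nonneg h]
  · rw [abs_of_neg h, sgn, decide_eq_false (not_le.2 h), if_neg Bool.false_ne_true,
      show u - -1/3 = -(-u - 1/3) by ring, abs_neg]

lemma inv_smul_sub_corner_signs (s : ℝ) (w : ℝ × ℝ × ℝ) :
    s⁻¹ • (w - corner (signs w)) =
      (s⁻¹ * (w.1 - sgn (decide (0 ≤ w.1)) / 3), s⁻¹ * (w.2.1 - sgn (decide (0 ≤ w.2.1)) / 3),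
        s⁻¹ * (w.2.2 - sgn (decide (0 ≤ w.2.2)) / 3)) := rfl

lemma lpBall_subset_iUnion_corner_vadd_smul {p s : ℝ} (hp : 2 ≤ p) (hs : √(2/3) ≤ s) :
    {w : ℝ × ℝ × ℝ | |w.1| ^ p + |w.2.1| ^ p + |w.2.2| ^ p ≤ 1} ⊆
      ⋃ e, corner e +ᵥ s • {w : ℝ × ℝ × ℝ | |w.1| ^ p + |w.2.1| ^ p + |w.2.2| ^ p ≤ 1} := by
  have hs0 : 0 < s := (Real.sqrt_pos.2 (by norm_num)).trans_le hs
  have hp0 : 0 ≤ p := by linarith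
  have hsp : (2/3 : ℝ) ^ (p/2) ≤ s ^ p := by
    calc (2/3 : ℝ) ^ (p/2) = √(2/3) ^ p := by
          rw [Real.sqrt_eq_rpow, ← Real.rpow_mul (by norm_num)]; ring_nf
      _ ≤ s ^ p := Real.rpow_le_rpow (Real.sqrt_nonneg _) hs hp0
  refine subset_iUnion_vadd_smul_of_forall hs0.ne' _ fun w hw => ⟨signs w, ?_⟩
  have hsum := sum_rpow_abs_sub_third_le hp (abs_nonneg w.1) (abs_nonneg w.2.1)
    (abs_nonneg w.2.2) hw
  simp only [inv_smul_sub_corner_signs, Set.mem_ofPred_eq,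
    abs_inv_mul_sub_sgn_div_three hs0.le, Real.mul_rpow (inv_nonneg.2 hs0.le) (abs_nonneg _),
    ← mul_add, Real.inv_rpow hs0.le]
  exact inv_mul_le_one_of_le₀ (hsum.trans hsp) (Real.rpow_nonneg hs0.le p)

lemma cube_subset_iUnion_corner_vadd_smul {s : ℝ} (hs : 2/3 ≤ s) :
    {w : ℝ × ℝ × ℝ | |w.1| ≤ 1 ∧ |w.2.1| ≤ 1 ∧ |w.2.2| ≤ 1} ⊆
      ⋃ e, corner e +ᵥ s • {w : ℝ × ℝ × ℝ | |w.1| ≤ 1 ∧ |w.2.1| ≤ 1 ∧ |w.2.2| ≤ 1} := by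
  have hs0 : 0 < s := by linarith
  have coord : ∀ u : ℝ, |u| ≤ 1 → s⁻¹ * |(|u| - 1/3)| ≤ 1 := fun u hu => by
    refine inv_mul_le_one_of_le₀ (hs.trans' ?_) hs0.le
    rw [abs_sub_le_iff]; constructor <;> linarith [abs_nonneg u]
  refine subset_iUnion_vadd_smul_of_forall hs0.ne' _ fun w ⟨h1, h2, h3⟩ => ⟨signs w, ?_⟩
  simp only [inv_smul_sub_corner_signs, Set.mem_ofPred_eq, abs_inv_mul_sub_sgn_div_three hs0.le]
  exact ⟨coord _ h1, coord _ h2, coord _ h3⟩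

theorem stmt_12 (p : ℝ) (hp : 2 ≤ p)
    (Kp : Set (ℝ × ℝ × ℝ))
    (hKp : Kp = {w : ℝ × ℝ × ℝ | |w.1| ^ p + |w.2.1| ^ p + |w.2.2| ^ p ≤ 1})
    (Kcube : Set (ℝ × ℝ × ℝ))
    (hKcube : Kcube = {w : ℝ × ℝ × ℝ | |w.1| ≤ 1 ∧ |w.2.1| ≤ 1 ∧ |w.2.2| ≤ 1})
    (s : ℝ) (hs : s = Real.sqrt (2/3)) :
    (Kp ⊆ ⋃ e : Bool × Bool × Bool,
        (((sgn e.1 / 3, sgn e.2.1 / 3, sgn e.2.2 / 3) : ℝ × ℝ × ℝ) +ᵥ s • Kp)) ∧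
      gamma 8 Kp ≤ Real.sqrt (2/3) ∧
    (Kcube ⊆ ⋃ e : Bool × Bool × Bool,
        (((sgn e.1 / 3, sgn e.2.1 / 3, sgn e.2.2 / 3) : ℝ × ℝ × ℝ) +ᵥ s • Kcube)) ∧
      gamma 8 Kcube ≤ Real.sqrt (2/3) := by
  subst hKp hKcube hs
  have hs0 : 0 < √(2/3) := Real.sqrt_pos.2 (by norm_num)
  have hs23 : 2/3 ≤ √(2/3) := Real.le_sqrt_of_sq_le (by norm_num)
  have hcard : Fintype.card (Bool × Bool × Bool) = 8 := rfl
  have coverp := lpBall_subset_iUnion_corner_vadd_smul hp le_rfl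
  have coverc := cube_subset_iUnion_corner_vadd_smul hs23
  exact ⟨coverp, gamma_le_of_subset_iUnion hcard hs0 _ coverp,
    coverc, gamma_le_of_subset_iUnion hcard hs0 _ coverc⟩
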